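/- If x ∈ C[0,1] admits roughness exponent R ∈ [0,1], g ∈ C¹(ℝ), and g' is nonzero on the range x([0,1]), then u := g∘x also admits roughness exponent R. -/

import Mathlib

open Finset Filter

noncomputable def pVar (x : ℝ → ℝ) (p : ℝ) (n : ℕ) : ℝ :=
  ∑ k ∈ range (2 ^ n), |x ((k + 1) / 2 ^ n) - x (k / 2 ^ n)| ^ p

/-- `x` admits the roughness exponent `R`. -/
def admitsRoughness (x : ℝ → ℝ) (R : ℝ) : Prop :=
  (∀ p : ℝ, 1 ≤ p → p > 1 / R → Tendsto (fun n => pVar x p n) atTop (nhds 0)) ∧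
  (∀ p : ℝ, 1 ≤ p → p < 1 / R → Tendsto (fun n => pVar x p n) atTop atTop)

/-!
On the compact interval `x([0,1])` the continuous function `|g'|` is bounded between two
constants `0 < c ≤ C`, so by the mean value theorem every increment of `g ∘ x` lies between
`c` and `C` times the corresponding increment of `x`. Hence the `p`-th variations along the
dyadic partitions satisfy `c ^ p ⟨x⟩ₙ ≤ ⟨g ∘ x⟩ₙ ≤ C ^ p ⟨x⟩ₙ`, and convergence to `0` or
divergence to `∞` passes from `x` to `g ∘ x`.
-/

theorem exists_mem_uIcc_sub_eq_deriv_mul {g : ℝ → ℝ} (hg : Differentiable ℝ g) (a b : ℝ) :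
    ∃ ξ ∈ Set.uIcc a b, g b - g a = deriv g ξ * (b - a) := by
  wlog hab : a < b generalizing a b
  · rcases (not_lt.mp hab).eq_or_lt with rfl | hba
    · exact ⟨_, Set.left_mem_uIcc, by ring⟩
    obtain ⟨ξ, hξ, hslope⟩ := this b a hba
    exact ⟨ξ, Set.uIcc_comm a b ▸ hξ, by linear_combination -hslope⟩
  obtain ⟨ξ, hξ, hslope⟩ :=
    exists_deriv_eq_slope g hab hg.continuous.continuousOn hg.differentiableOn
  refine ⟨ξ, Set.Icc_subset_uIcc (Set.Ioo_subset_Icc_self hξ), ?_⟩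
  rw [hslope, div_mul_cancel₀ _ (sub_ne_zero.mpr hab.ne')]

theorem abs_sub_bounds_of_abs_deriv_bounds {g : ℝ → ℝ} {K : Set ℝ} {c C : ℝ}
    (hg : Differentiable ℝ g) (hK : K.OrdConnected)
    (hbounds : ∀ ξ ∈ K, c ≤ |deriv g ξ| ∧ |deriv g ξ| ≤ C) {a b : ℝ} (ha : a ∈ K) (hb : b ∈ K) :
    c * |b - a| ≤ |g b - g a| ∧ |g b - g a| ≤ C * |b - a| := by
  obtain ⟨ξ, hξ, hmvt⟩ := exists_mem_uIcc_sub_eq_deriv_mul hg a b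
  obtain ⟨hcξ, hCξ⟩ := hbounds ξ (hK.uIcc_subset ha hb hξ)
  rw [hmvt, abs_mul]
  exact ⟨by gcongr, by gcongr⟩

theorem div_two_pow_mem_Icc {k n : ℕ} (hk : k ≤ 2 ^ n) : (k : ℝ) / 2 ^ n ∈ Set.Icc (0 : ℝ) 1 :=
  ⟨by positivity, div_le_one_of_le₀ (by exact_mod_cast hk) (by positivity)⟩

theorem dyadic_endpoints_mem_Icc {k n : ℕ} (hk : k ∈ range (2 ^ n)) :
    (k : ℝ) / 2 ^ n ∈ Set.Icc (0 : ℝ) 1 ∧ ((k : ℝ) + 1) / 2 ^ n ∈ Set.Icc (0 : ℝ) 1 := by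
  have hk : k + 1 ≤ 2 ^ n := mem_range.mp hk
  refine ⟨div_two_pow_mem_Icc (by omega), ?_⟩
  exact_mod_cast div_two_pow_mem_Icc hk

theorem pVar_le_mul_pVar {x y : ℝ → ℝ} {C p : ℝ} (hC : 0 ≤ C) (hp : 0 ≤ p)
    (hy : ∀ s ∈ Set.Icc (0 : ℝ) 1, ∀ t ∈ Set.Icc (0 : ℝ) 1, |y t - y s| ≤ C * |x t - x s|)
    (n : ℕ) : pVar y p n ≤ C ^ p * pVar x p n := by
  rw [pVar, pVar, mul_sum]
  refine sum_le_sum fun k hk => ?_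
  obtain ⟨hs, ht⟩ := dyadic_endpoints_mem_Icc hk
  rw [← Real.mul_rpow hC (abs_nonneg _)]
  exact Real.rpow_le_rpow (abs_nonneg _) (hy _ hs _ ht) hp

theorem mul_pVar_le_pVar {x y : ℝ → ℝ} {c p : ℝ} (hc : 0 ≤ c) (hp : 0 ≤ p)
    (hy : ∀ s ∈ Set.Icc (0 : ℝ) 1, ∀ t ∈ Set.Icc (0 : ℝ) 1, c * |x t - x s| ≤ |y t - y s|)
    (n : ℕ) : c ^ p * pVar x p n ≤ pVar y p n := by
  rw [pVar, pVar, mul_sum]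
  refine sum_le_sum fun k hk => ?_
  obtain ⟨hs, ht⟩ := dyadic_endpoints_mem_Icc hk
  rw [← Real.mul_rpow hc (abs_nonneg _)]
  exact Real.rpow_le_rpow (by positivity) (hy _ hs _ ht) hp

theorem pVar_nonneg (x : ℝ → ℝ) (p : ℝ) (n : ℕ) : 0 ≤ pVar x p n :=
  sum_nonneg fun _ _ => Real.rpow_nonneg (abs_nonneg _) p

theorem admitsRoughness_of_abs_sub_comparable {x y : ℝ → ℝ} {R c C : ℝ} (hc : 0 < c)
    (hC : 0 ≤ C)
    (hy : ∀ s ∈ Set.Icc (0 : ℝ) 1, ∀ t ∈ Set.Icc (0 : ℝ) 1,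
      c * |x t - x s| ≤ |y t - y s| ∧ |y t - y s| ≤ C * |x t - x s|)
    (hx : admitsRoughness x R) : admitsRoughness y R := by
  refine ⟨fun p hp hpR => ?_, fun p hp hpR => ?_⟩
  · refine squeeze_zero (pVar_nonneg y p) (pVar_le_mul_pVar hC (by linarith)
      (fun s hs t ht => (hy s hs t ht).2)) ?_
    simpa using (hx.1 p hp hpR).const_mul (C ^ p)
  · exact tendsto_atTop_mono (mul_pVar_le_pVar hc.le (by linarith)
      (fun s hs t ht => (hy s hs t ht).1)) ((hx.2 p hp hpR).const_mul_atTop (by positivity))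

theorem stmt1_general (x g : ℝ → ℝ) (R : ℝ)
    (hx : ContinuousOn x (Set.Icc 0 1))
    (hrough : admitsRoughness x R)
    (hg : ContDiff ℝ 1 g)
    (hg' : ∀ t ∈ Set.Icc (0 : ℝ) 1, deriv g (x t) ≠ 0) :
    admitsRoughness (g ∘ x) R := by
  set K := x '' Set.Icc (0 : ℝ) 1
  have hKcompact : IsCompact K := isCompact_Icc.image_of_continuousOn hx
  have hKne : K.Nonempty := (Set.nonempty_Icc.mpr zero_le_one).image x
  have hKconn : K.OrdConnected := (isPreconnected_Icc.image x hx).ordConnected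
  have habs_deriv : ContinuousOn (fun y => |deriv g y|) K :=
    (hg.continuous_deriv le_rfl).abs.continuousOn
  obtain ⟨_, ⟨tc, htc, rfl⟩, hmin⟩ := hKcompact.exists_isMinOn hKne habs_deriv
  obtain ⟨ξC, -, hmax⟩ := hKcompact.exists_isMaxOn hKne habs_deriv
  refine admitsRoughness_of_abs_sub_comparable (abs_pos.mpr (hg' tc htc))
    (abs_nonneg (deriv g ξC)) (fun s hs t ht => ?_) hrough
  exact abs_sub_bounds_of_abs_deriv_bounds (hg.differentiable one_ne_zero) hKconn
    (fun ξ hξ => ⟨hmin hξ, hmax hξ⟩) (Set.mem_image_of_mem x hs) (Set.mem_image_of_mem x ht)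

theorem stmt1 (x g : ℝ → ℝ) (R : ℝ) (hR : R ∈ Set.Icc (0 : ℝ) 1)
    (hx : ContinuousOn x (Set.Icc 0 1))
    (hrough : admitsRoughness x R)
    (hg : ContDiff ℝ 1 g)
    (hg' : ∀ t ∈ Set.Icc (0 : ℝ) 1, deriv g (x t) ≠ 0) :
    admitsRoughness (g ∘ x) R :=
  stmt1_general x g R hx hrough hg hg'
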